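/- Let 0 < k < n and let M = U_{k,n}(q) be the uniform q-matroid of rank k on E = F_q^n. Then for every m < n, there is no F_q-linear rank-metric code C ⊆ F_q^{n×m} such that M = M[C], i.e., such that for all subspaces U of E, (dim C - dim C(U^⊥))/m = min{k, dim U}. -/

import Mathlib

/-! If `C` represents `U_{k,n}(q)`, then `ρ_C(E) = k` forces `dim C = k m`. A nonzero codeword
`M` of rank at most `n - k` lies in `C((colsp M^⊥)^⊥)`, so `ρ_C(colsp M^⊥) < dim C / m = k`,
although `colsp M^⊥` has dimension at least `k`. Hence `C` has minimum rank distance greater than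
`n - k`, and keeping only `m - (n - k)` columns is injective on `C` (the Singleton bound):
`k m ≤ n (m - n + k)`, i.e. `n (n - k) ≤ m (n - k)`, contradicting `m < n`. -/

open Matrix

variable {F : Type*} [Field F]

/-- Column space of a matrix: the span of its columns. -/
def colSpace {n m : ℕ} (M : Matrix (Fin n) (Fin m) F) : Submodule F (Fin n → F) :=
  Submodule.span F (Set.range Mᵀ)

lemma colSpace_le_iff {n m : ℕ} (M : Matrix (Fin n) (Fin m) F) (U : Submodule F (Fin n → F)) :
    colSpace M ≤ U ↔ ∀ j, Mᵀ j ∈ U := by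
  rw [colSpace, Submodule.span_le]
  constructor
  · intro h j; exact h ⟨j, rfl⟩
  · rintro h _ ⟨j, rfl⟩; exact h j

/-- `C(U)`: the codewords of `C` whose column space is contained in `U`. -/
def codeCU {n m : ℕ} (C : Submodule F (Matrix (Fin n) (Fin m) F))
    (U : Submodule F (Fin n → F)) : Submodule F (Matrix (Fin n) (Fin m) F) where
  carrier := {M | M ∈ C ∧ colSpace M ≤ U}
  add_mem' := by
    rintro a b ⟨haC, ha⟩ ⟨hbC, hb⟩
    refine ⟨C.add_mem haC hbC, (colSpace_le_iff _ _).2 fun j => ?_⟩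
    have h := U.add_mem ((colSpace_le_iff a U).1 ha j) ((colSpace_le_iff b U).1 hb j)
    rw [Matrix.transpose_add]; exact h
  zero_mem' := by
    exact ⟨C.zero_mem, (colSpace_le_iff _ _).2 fun j => U.zero_mem⟩
  smul_mem' := by
    rintro c a ⟨haC, ha⟩
    refine ⟨C.smul_mem c haC, (colSpace_le_iff _ _).2 fun j => ?_⟩
    have h := U.smul_mem c ((colSpace_le_iff a U).1 ha j)
    rw [Matrix.transpose_smul]; exact h

/-- Orthogonal complement with respect to the standard (dot-product) bilinear form. -/
def perp {n : ℕ} (U : Submodule F (Fin n → F)) : Submodule F (Fin n → F) where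
  carrier := {v | ∀ u ∈ U, v ⬝ᵥ u = 0}
  add_mem' := by
    intro a b ha hb u hu
    rw [add_dotProduct, ha u hu, hb u hu, add_zero]
  zero_mem' := by
    intro u hu
    rw [zero_dotProduct]
  smul_mem' := by
    intro c a ha u hu
    rw [smul_dotProduct, ha u hu, smul_zero]

/-- The minimum rank distance of a matrix code. -/
noncomputable def minRankDist {n m : ℕ} (C : Submodule F (Matrix (Fin n) (Fin m) F)) : ℕ :=
  sInf {r : ℕ | ∃ M ∈ C, M ≠ 0 ∧ M.rank = r}

/-- The rank function of the q-polymatroid associated to a matrix rank-metric code. -/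
noncomputable def rhoCode {n m : ℕ} (C : Submodule F (Matrix (Fin n) (Fin m) F))
    (U : Submodule F (Fin n → F)) : ℚ :=
  ((Module.finrank F C : ℚ) - (Module.finrank F (codeCU C (perp U)) : ℚ)) / (m : ℚ)

open Module

lemma finrank_colSpace {n m : ℕ} (M : Matrix (Fin n) (Fin m) F) :
    finrank F (colSpace M) = M.rank :=
  (rank_eq_finrank_span_cols M).symm

lemma colSpace_eq_bot_iff {n m : ℕ} (M : Matrix (Fin n) (Fin m) F) :
    colSpace M = ⊥ ↔ M = 0 := by
  rw [colSpace, Submodule.span_eq_bot]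
  constructor
  · exact fun h => transpose_eq_zero.1 (funext fun j => h _ ⟨j, rfl⟩)
  · rintro rfl _ ⟨j, rfl⟩
    rfl

lemma mem_codeCU {n m : ℕ} {C : Submodule F (Matrix (Fin n) (Fin m) F)}
    {U : Submodule F (Fin n → F)} {M : Matrix (Fin n) (Fin m) F} :
    M ∈ codeCU C U ↔ M ∈ C ∧ colSpace M ≤ U :=
  Iff.rfl

lemma codeCU_bot {n m : ℕ} (C : Submodule F (Matrix (Fin n) (Fin m) F)) :
    codeCU C ⊥ = ⊥ := by
  ext M
  rw [mem_codeCU, le_bot_iff, colSpace_eq_bot_iff, Submodule.mem_bot]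
  exact ⟨And.right, fun h => ⟨h ▸ C.zero_mem, h⟩⟩

lemma perp_eq_comap_dualAnnihilator {n : ℕ} (U : Submodule F (Fin n → F)) :
    perp U = U.dualAnnihilator.comap (dotProductEquiv F (Fin n)).toLinearMap := by
  ext v
  simp [perp, Submodule.mem_dualAnnihilator]

lemma finrank_add_finrank_perp {n : ℕ} (U : Submodule F (Fin n → F)) :
    finrank F U + finrank F (perp U) = n := by
  rw [perp_eq_comap_dualAnnihilator, Submodule.comap_equiv_eq_map_symm,
    LinearEquiv.finrank_map_eq, Subspace.finrank_add_finrank_dualAnnihilator_eq,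
    finrank_fin_fun]

lemma perp_top {n : ℕ} : perp (⊤ : Submodule F (Fin n → F)) = ⊥ := by
  have h := finrank_add_finrank_perp (⊤ : Submodule F (Fin n → F))
  rw [finrank_top, finrank_fin_fun] at h
  exact Submodule.finrank_eq_zero.1 (by omega)

lemma le_perp_perp {n : ℕ} (U : Submodule F (Fin n → F)) : U ≤ perp (perp U) := by
  intro u hu v hv
  rw [dotProduct_comm]
  exact hv u hu

lemma rhoCode_top {n m : ℕ} (C : Submodule F (Matrix (Fin n) (Fin m) F)) :
    rhoCode C ⊤ = finrank F C / m := by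
  rw [rhoCode, perp_top, codeCU_bot, finrank_bot, Nat.cast_zero, sub_zero]

lemma rhoCode_perp_colSpace_lt {n m : ℕ} (hm : 0 < m)
    {C : Submodule F (Matrix (Fin n) (Fin m) F)} {M : Matrix (Fin n) (Fin m) F}
    (hMC : M ∈ C) (hM : M ≠ 0) :
    rhoCode C (perp (colSpace M)) < finrank F C / m := by
  have hmem : M ∈ codeCU C (perp (perp (colSpace M))) := ⟨hMC, le_perp_perp _⟩
  have hpos : 0 < finrank F (codeCU C (perp (perp (colSpace M)))) :=
    Nat.pos_of_ne_zero fun h => hM (by simpa [Submodule.finrank_eq_zero.1 h] using hmem)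
  have hposQ : (0 : ℚ) < finrank F (codeCU C (perp (perp (colSpace M)))) := by
    exact_mod_cast hpos
  exact div_lt_div_of_pos_right (by linarith) (by exact_mod_cast hm)

lemma rank_le_card_compl_of_col_eq_zero {n m : ℕ} (M : Matrix (Fin n) (Fin m) F)
    (S : Finset (Fin m)) (hS : ∀ j ∈ S, M.col j = 0) : M.rank ≤ Sᶜ.card := by
  classical
  have hspan : Submodule.span F (Set.range M.col) ≤
      Submodule.span F ((Sᶜ.image M.col : Finset (Fin n → F)) : Set (Fin n → F)) := by
    rw [Submodule.span_le]
    rintro _ ⟨j, rfl⟩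
    by_cases hj : j ∈ S
    · rw [hS j hj]
      exact Submodule.zero_mem _
    · exact Submodule.subset_span (by simpa using ⟨j, hj, rfl⟩)
  calc M.rank = finrank F (Submodule.span F (Set.range M.col)) :=
        rank_eq_finrank_span_cols M
    _ ≤ (Sᶜ.image M.col).card :=
        (Submodule.finrank_mono hspan).trans (finrank_span_finset_le_card _)
    _ ≤ Sᶜ.card := Finset.card_image_le

lemma finrank_le_mul_of_forall_lt_rank {n m : ℕ} (C : Submodule F (Matrix (Fin n) (Fin m) F))
    (r : ℕ) (hC : ∀ M ∈ C, M ≠ 0 → r < M.rank) : finrank F C ≤ n * (m - r) := by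
  obtain ⟨S, -, hS⟩ := Finset.exists_subset_card_eq (s := (Finset.univ : Finset (Fin m)))
    (n := m - r) (by simp)
  let restrict : Matrix (Fin n) (Fin m) F →ₗ[F] Matrix (Fin n) S F :=
    { toFun := fun M => M.submatrix id Subtype.val
      map_add' := fun _ _ => rfl
      map_smul' := fun _ _ => rfl }
  have hinj : Function.Injective (restrict ∘ₗ C.subtype) := by
    rw [← LinearMap.ker_eq_bot, eq_bot_iff]
    rintro ⟨M, hMC⟩ hM
    by_contra hne
    have hcol : ∀ j ∈ S, M.col j = 0 := fun j hj =>
      funext fun i => congrFun (congrFun hM i) ⟨j, hj⟩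
    have := (hC M hMC (by simpa using hne)).trans_le (rank_le_card_compl_of_col_eq_zero M S hcol)
    rw [Finset.card_compl, Fintype.card_fin] at this
    omega
  simpa [finrank_matrix, hS] using LinearMap.finrank_le_finrank_of_injective hinj

lemma mul_sub_sub_lt_mul {n k m : ℕ} (hk : 0 < k) (hkn : k < n) (hm : 0 < m) (hmn : m < n) :
    n * (m - (n - k)) < k * m := by
  rcases le_or_gt m (n - k) with h | h
  · rw [Nat.sub_eq_zero_of_le h, mul_zero]
    positivity
  · zify [h.le, hkn.le]
    nlinarith [mul_pos (sub_pos.2 (Int.ofNat_lt.2 hkn)) (sub_pos.2 (Int.ofNat_lt.2 hmn))]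

theorem uniform_not_representable_general {n k : ℕ} (hk0 : 0 < k) (hkn : k < n) :
    ∀ m : ℕ, 0 < m → m < n →
      ¬ ∃ C : Submodule F (Matrix (Fin n) (Fin m) F),
          ∀ U : Submodule F (Fin n → F),
            rhoCode C U = ((min k (Module.finrank F U) : ℕ) : ℚ) := by
  rintro m hm hmn ⟨C, hC⟩
  have hmQ : (m : ℚ) ≠ 0 := by exact_mod_cast hm.ne'
  have hdim : finrank F C = k * m := by
    have h := hC ⊤
    rw [rhoCode_top, finrank_top, finrank_fin_fun, min_eq_left hkn.le,
      div_eq_iff hmQ] at h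
    exact_mod_cast h
  have hdist : ∀ M ∈ C, M ≠ 0 → n - k < M.rank := by
    intro M hMC hM
    by_contra! hle
    have hk : k ≤ finrank F (perp (colSpace M)) := by
      have := finrank_add_finrank_perp (colSpace M)
      rw [finrank_colSpace] at this
      omega
    have h := rhoCode_perp_colSpace_lt hm hMC hM
    rw [hC, min_eq_left hk, hdim, Nat.cast_mul, mul_div_cancel_right₀ _ hmQ] at h
    exact lt_irrefl _ h
  have hsingleton := finrank_le_mul_of_forall_lt_rank C (n - k) hdist
  rw [hdim] at hsingleton
  exact (mul_sub_sub_lt_mul hk0 hkn hm hmn).not_ge hsingleton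

/-- the nontrivial uniform q-matroid `U_{k,n}(q)` is not
`F_q^{n×m}`-representable for any `m < n`. -/
theorem uniform_not_representable [Fintype F] {n k : ℕ} (hk0 : 0 < k) (hkn : k < n) :
    ∀ m : ℕ, 0 < m → m < n →
      ¬ ∃ C : Submodule F (Matrix (Fin n) (Fin m) F),
          ∀ U : Submodule F (Fin n → F),
            rhoCode C U = ((min k (Module.finrank F U) : ℕ) : ℚ) :=
  uniform_not_representable_general hk0 hkn
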